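/- Let 0 < q < 1, δ ∈ {0,1,2}, μ > 0, and λ ∈ ℂ with (q^{2λ+2};q²)_k ≠ 0 for all k ≥ 0. Define ℱ(x) = ∑_{k=0}^∞ q^{(2−δ)k(k+λ)−kδ} (1−q²)^{2k} (μx)^{λ+2k} / ((q²;q²)_k (q^{2λ+2};q²)_k) for x > 0, where (μx)^{λ} = exp(λ ln(μx)). For δ ∈ {0,1} the series converges for every x > 0; for δ = 2 assume (1−q²)μx < q² so that all series below converge absolutely. Then ℱ satisfies the second-order q-difference equation ℱ(q^{−1}x) − (q^{λ} + q^{−λ}) ℱ(x) + ℱ(qx) − μ² q^{−2δ} (1−q²)² x² ℱ(q^{1−δ}x) = 0. In particular, the three types of modified q²-Bessel functions are eigenfunctions of the two-body relativistic open Toda Hamiltonian. -/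

import Mathlib

/-- The finite q-Pochhammer symbol `(a;Q)_n = ∏_{j<n} (1 − a Q^j)`. -/
noncomputable def qPoch (Q a : ℂ) (n : ℕ) : ℂ :=
  ∏ j ∈ Finset.range n, (1 - a * Q ^ j)

/-- `q^w = exp(w ln q)` for real `q > 0` and complex `w`. -/
noncomputable def qpow (q : ℝ) (w : ℂ) : ℂ := Complex.exp (w * (Real.log q : ℂ))

/-- The `k`-th term of the series
`ℱ(x) = ∑_k q^{(2−δ)k(k+λ)−kδ}(1−q²)^{2k}(μx)^{λ+2k}/((q²;q²)_k (q^{2λ+2};q²)_k)`. -/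
noncomputable def todaTerm (q : ℝ) (δ : ℕ) (μ : ℝ) (lam : ℂ) (x : ℝ) (k : ℕ) : ℂ :=
  qpow q ((2 - (δ : ℂ)) * k * (k + lam) - k * (δ : ℂ)) * (1 - (q : ℂ) ^ 2) ^ (2 * k)
    * Complex.exp ((lam + 2 * (k : ℂ)) * (Real.log (μ * x) : ℂ))
    / (qPoch ((q : ℂ) ^ 2) ((q : ℂ) ^ 2) k * qPoch ((q : ℂ) ^ 2) (qpow q (2 * lam + 2)) k)

/-- `ℱ(x)`, the modified q²-Bessel function of type `j` up to normalization. -/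
noncomputable def todaF (q : ℝ) (δ : ℕ) (μ : ℝ) (lam : ℂ) (x : ℝ) : ℂ :=
  ∑' k : ℕ, todaTerm q δ μ lam x k

/-!
Write `T_k(x)` for the `k`-th term of `ℱ(x)`. Since `T_k(q^s x) = q^{s(λ+2k)} T_k(x)`, the
three-term part of the equation is `∑_k (q^{-(λ+2k)} - q^λ - q^{-λ} + q^{λ+2k}) T_k(x)`. The
coefficient vanishes at `k = 0`, and for `k + 1` the factorisation
`q^{-a} - q^b - q^{-b} + q^a = q^{-a} (1 - q^{a-b}) (1 - q^{a+b})` with `a = λ + 2k + 2`, `b = λ`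
produces exactly the two new Pochhammer factors in the denominator of `T_{k+1}(x)`, so that term
equals `μ² q^{-2δ} (1-q²)² x² T_k(q^{1-δ} x)`. Convergence is the ratio test: `T_{k+1}/T_k` tends
to `0` for `δ < 2` and to `((1-q²)μx/q)²` for `δ = 2`.
-/

open Filter Topology

theorem summable_of_succ_eq_smul_of_tendsto {𝕜 E : Type*} [NormedField 𝕜]
    [NormedAddCommGroup E] [NormedSpace 𝕜 E] [CompleteSpace E] {f : ℕ → E} {r : ℕ → 𝕜}
    {ℓ : 𝕜} (hf : ∀ k, f (k + 1) = r k • f k) (hr : Tendsto r atTop (𝓝 ℓ)) (hℓ : ‖ℓ‖ < 1) :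
    Summable f := by
  obtain ⟨ρ, hℓρ, hρ⟩ := exists_between hℓ
  refine summable_of_ratio_norm_eventually_le hρ ?_
  filter_upwards [hr.norm.eventually_le_const hℓρ] with k hk
  rw [hf, norm_smul]
  exact mul_le_mul_of_nonneg_right hk (norm_nonneg _)

theorem qPoch_succ (Q a : ℂ) (n : ℕ) : qPoch Q a (n + 1) = qPoch Q a n * (1 - a * Q ^ n) :=
  Finset.prod_range_succ _ _

section qpow

variable (q : ℝ)

theorem qpow_add (a b : ℂ) : qpow q (a + b) = qpow q a * qpow q b := by
  rw [qpow, add_mul, Complex.exp_add, qpow, qpow]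

theorem qpow_neg (a : ℂ) : qpow q (-a) = (qpow q a)⁻¹ := by
  rw [qpow, neg_mul, Complex.exp_neg, qpow]

theorem qpow_natCast_mul (n : ℕ) (a : ℂ) : qpow q (n * a) = qpow q a ^ n := by
  rw [qpow, mul_assoc, Complex.exp_nat_mul, qpow]

theorem qpow_four_term_eq (a b : ℂ) :
    qpow q (-a) - qpow q b - qpow q (-b) + qpow q a
      = qpow q (-a) * ((1 - qpow q (a - b)) * (1 - qpow q (a + b))) := by
  have h₁ : qpow q (-a) * qpow q (a - b) = qpow q (-b) := by rw [← qpow_add]; ring_nf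
  have h₂ : qpow q (-a) * qpow q (a + b) = qpow q b := by rw [← qpow_add]; ring_nf
  have h₃ : qpow q (-a) * qpow q (a - b) * qpow q (a + b) = qpow q a := by
    rw [← qpow_add, ← qpow_add]; ring_nf
  linear_combination h₁ + h₂ - h₃

variable {q}

theorem qpow_natCast (hq : 0 < q) (n : ℕ) : qpow q n = (q : ℂ) ^ n := by
  rw [← mul_one (n : ℂ), qpow_natCast_mul, qpow, one_mul, ← Complex.ofReal_exp,
    Real.exp_log hq]

theorem qpow_two (hq : 0 < q) : qpow q 2 = (q : ℂ) ^ 2 := by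
  exact_mod_cast qpow_natCast hq 2

theorem qpow_two_mul_natCast (hq : 0 < q) (k : ℕ) : qpow q (2 * k) = ((q : ℂ) ^ 2) ^ k := by
  rw [mul_comm, qpow_natCast_mul, qpow_two hq]

theorem qpow_mul_sq_pow (hq : 0 < q) (a : ℂ) (k : ℕ) :
    qpow q a * ((q : ℂ) ^ 2) ^ k = qpow q (a + 2 * k) := by
  rw [qpow_add, qpow_two_mul_natCast hq]

theorem norm_qpow_lt_one (hq0 : 0 < q) (hq1 : q < 1) {a : ℂ} (ha : 0 < a.re) :
    ‖qpow q a‖ < 1 := by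
  rw [qpow, Complex.norm_exp, Complex.re_mul_ofReal]
  exact Real.exp_lt_one_iff.2 (mul_neg_of_pos_of_neg ha (Real.log_neg hq0 hq1))

theorem one_sub_qpow_ne_zero (hq0 : 0 < q) (hq1 : q < 1) {a : ℂ} (ha : 0 < a.re) :
    1 - qpow q a ≠ 0 := by
  intro h
  have h1 := norm_qpow_lt_one hq0 hq1 ha
  rw [← sub_eq_zero.1 h, norm_one] at h1
  exact lt_irrefl _ h1

theorem one_sub_qpow_ne_zero_of_qPoch (hq : 0 < q) {lam : ℂ}
    (hpoch : ∀ k : ℕ, qPoch ((q : ℂ) ^ 2) (qpow q (2 * lam + 2)) k ≠ 0) (k : ℕ) :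
    1 - qpow q (2 * lam + 2 * k + 2) ≠ 0 := by
  have h := hpoch (k + 1)
  rw [qPoch_succ, qpow_mul_sq_pow hq, add_right_comm] at h
  exact right_ne_zero_of_mul h

theorem tendsto_qpow_mul_add (hq0 : 0 < q) (hq1 : q < 1) {a : ℂ} (ha : 0 < a.re) (b : ℂ) :
    Tendsto (fun k : ℕ => qpow q (a * k + b)) atTop (𝓝 0) := by
  have h := (tendsto_pow_atTop_nhds_zero_of_norm_lt_one
    (norm_qpow_lt_one hq0 hq1 ha)).mul_const (qpow q b)
  rw [zero_mul] at h
  refine h.congr fun k => ?_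
  rw [qpow_add, mul_comm a, qpow_natCast_mul]

end qpow

noncomputable def todaRatio (q : ℝ) (δ : ℕ) (μ : ℝ) (lam : ℂ) (y : ℝ) (k : ℕ) : ℂ :=
  qpow q ((2 - δ) * (2 * k + 1 + lam) - δ) * (1 - (q : ℂ) ^ 2) ^ 2 * ((μ * y : ℝ) : ℂ) ^ 2
    / ((1 - qpow q (2 * k + 2)) * (1 - qpow q (2 * lam + 2 * k + 2)))

section Toda

variable {q : ℝ} {δ : ℕ} {μ : ℝ} {lam : ℂ}
theorem todaTerm_succ (hq : 0 < q) {y : ℝ} (hy : 0 < μ * y) (k : ℕ) :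
    todaTerm q δ μ lam y (k + 1) = todaRatio q δ μ lam y k * todaTerm q δ μ lam y k := by
  have hexp : qpow q ((2 - δ) * ((k + 1 : ℕ) : ℂ) * ((k + 1 : ℕ) + lam) - (k + 1 : ℕ) * δ)
      = qpow q ((2 - δ) * (2 * k + 1 + lam) - δ) * qpow q ((2 - δ) * k * (k + lam) - k * δ) := by
    rw [← qpow_add]; push_cast; ring_nf
  have hpow : (1 - (q : ℂ) ^ 2) ^ (2 * (k + 1))
      = (1 - (q : ℂ) ^ 2) ^ 2 * (1 - (q : ℂ) ^ 2) ^ (2 * k) := by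
    ring
  have hmono : Complex.exp ((lam + 2 * ((k + 1 : ℕ) : ℂ)) * (Real.log (μ * y) : ℂ))
      = ((μ * y : ℝ) : ℂ) ^ 2 * Complex.exp ((lam + 2 * k) * (Real.log (μ * y) : ℂ)) := by
    rw [show (lam + 2 * ((k + 1 : ℕ) : ℂ)) * (Real.log (μ * y) : ℂ) = (Real.log (μ * y) : ℂ)
        + (Real.log (μ * y) : ℂ) + (lam + 2 * k) * (Real.log (μ * y) : ℂ) by push_cast; ring,
      Complex.exp_add, Complex.exp_add, ← Complex.ofReal_exp, Real.exp_log hy, sq]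
  have hQ : (q : ℂ) ^ 2 * ((q : ℂ) ^ 2) ^ k = qpow q (2 * k + 2) := by
    rw [qpow_add, qpow_two_mul_natCast hq, qpow_two hq, mul_comm]
  have hA : qpow q (2 * lam + 2) * ((q : ℂ) ^ 2) ^ k = qpow q (2 * lam + 2 * k + 2) := by
    rw [qpow_mul_sq_pow hq, add_right_comm]
  rw [todaTerm, todaTerm, todaRatio, qPoch_succ, qPoch_succ, hexp, hpow, hmono, hQ, hA]
  simp only [div_eq_mul_inv, mul_inv]
  ring

theorem todaTerm_rpow_mul (hq : 0 < q) {x : ℝ} (hμx : μ * x ≠ 0) (s : ℝ) (k : ℕ) :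
    todaTerm q δ μ lam (q ^ s * x) k = qpow q (s * (lam + 2 * k)) * todaTerm q δ μ lam x k := by
  have hlog : Real.log (μ * (q ^ s * x)) = s * Real.log q + Real.log (μ * x) := by
    rw [mul_left_comm, Real.log_mul (Real.rpow_pos_of_pos hq s).ne' hμx, Real.log_rpow hq]
  have hexp : Complex.exp ((lam + 2 * k) * ((s * Real.log q + Real.log (μ * x) : ℝ) : ℂ))
      = qpow q (s * (lam + 2 * k)) * Complex.exp ((lam + 2 * k) * (Real.log (μ * x) : ℂ)) := by
    rw [qpow, ← Complex.exp_add]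
    push_cast
    ring_nf
  rw [todaTerm, todaTerm, hlog, hexp]
  ring

theorem tendsto_todaRatio_denominator (hq0 : 0 < q) (hq1 : q < 1) (lam : ℂ) :
    Tendsto (fun k : ℕ => (1 - qpow q (2 * k + 2)) * (1 - qpow q (2 * lam + 2 * k + 2)))
      atTop (𝓝 1) := by
  have h₁ := tendsto_qpow_mul_add hq0 hq1 (a := 2) (by norm_num) 2
  have h₂ := tendsto_qpow_mul_add hq0 hq1 (a := 2) (by norm_num) (2 * lam + 2)
  simpa only [sub_zero, mul_one, add_comm (2 * lam), add_assoc] using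
    (h₁.const_sub 1).mul (h₂.const_sub 1)

theorem tendsto_todaRatio_of_lt_two (hq0 : 0 < q) (hq1 : q < 1) (hδ : δ < 2) (y : ℝ) :
    Tendsto (todaRatio q δ μ lam y) atTop (𝓝 0) := by
  have hre : 0 < (2 * (2 - δ) : ℂ).re := by simpa using hδ
  have hnum := tendsto_qpow_mul_add hq0 hq1 hre ((2 - δ) * (1 + lam) - δ)
  have h := (hnum.mul_const ((1 - (q : ℂ) ^ 2) ^ 2 * ((μ * y : ℝ) : ℂ) ^ 2)).div
    (tendsto_todaRatio_denominator hq0 hq1 lam) one_ne_zero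
  rw [zero_mul, zero_div] at h
  refine h.congr fun k => ?_
  have hexp : qpow q (2 * (2 - δ) * k + ((2 - δ) * (1 + lam) - δ))
      = qpow q ((2 - δ) * (2 * k + 1 + lam) - δ) := by ring_nf
  rw [Pi.div_apply, hexp, todaRatio, mul_assoc (qpow _ _)]

theorem tendsto_todaRatio_two (hq0 : 0 < q) (hq1 : q < 1) (y : ℝ) :
    Tendsto (todaRatio q 2 μ lam y) atTop (𝓝 ((((1 - q ^ 2) * μ * y / q : ℝ) : ℂ) ^ 2)) := by
  have h := (tendsto_const_nhds (x := qpow q (-2) * (1 - (q : ℂ) ^ 2) ^ 2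
    * ((μ * y : ℝ) : ℂ) ^ 2)).div (tendsto_todaRatio_denominator hq0 hq1 lam) one_ne_zero
  convert h using 2
  · ext k
    rw [Pi.div_apply, todaRatio]
    congr 4
    push_cast
    ring
  · rw [div_one, qpow_neg, qpow_two hq0]
    push_cast
    field_simp

theorem summable_todaTerm (hq0 : 0 < q) (hq1 : q < 1) (hδ : δ ≤ 2) {y : ℝ} (hy : 0 < μ * y)
    (h2 : δ = 2 → (1 - q ^ 2) * μ * y < q) : Summable (todaTerm q δ μ lam y) := by
  rcases hδ.lt_or_eq with hδ | rfl
  · exact summable_of_succ_eq_smul_of_tendsto (todaTerm_succ hq0 hy)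
      (tendsto_todaRatio_of_lt_two hq0 hq1 hδ y) (by simp)
  · refine summable_of_succ_eq_smul_of_tendsto (todaTerm_succ hq0 hy)
      (tendsto_todaRatio_two hq0 hq1 y) ?_
    have hpos : 0 < (1 - q ^ 2) * μ * y := by
      rw [mul_assoc]
      exact mul_pos (by nlinarith) hy
    have hnn : 0 ≤ (1 - q ^ 2) * μ * y / q := (div_pos hpos hq0).le
    rw [norm_pow, Complex.norm_real, Real.norm_of_nonneg hnn]
    exact pow_lt_one₀ hnn ((div_lt_one hq0).2 (h2 rfl)) two_ne_zero

theorem summable_todaTerm_rpow_mul (hq0 : 0 < q) (hq1 : q < 1) (hδ : δ ≤ 2) (hμ : 0 < μ)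
    {x : ℝ} (hx : 0 < x) (hδ2 : δ = 2 → (1 - q ^ 2) * μ * x < q ^ 2) {s : ℝ} (hs : -1 ≤ s) :
    Summable (todaTerm q δ μ lam (q ^ s * x)) := by
  have hqs : q ^ s ≤ q⁻¹ := by
    rw [← Real.rpow_neg_one]
    exact Real.rpow_le_rpow_of_exponent_ge hq0 hq1.le hs
  have hc : 0 ≤ (1 - q ^ 2) * μ * x := mul_nonneg (mul_nonneg (by nlinarith) hμ.le) hx.le
  refine summable_todaTerm hq0 hq1 hδ (by positivity) fun h2 => ?_
  calc (1 - q ^ 2) * μ * (q ^ s * x) = (1 - q ^ 2) * μ * x * q ^ s := by ring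
    _ ≤ (1 - q ^ 2) * μ * x * q⁻¹ := mul_le_mul_of_nonneg_left hqs hc
    _ < q ^ 2 * q⁻¹ := mul_lt_mul_of_pos_right (hδ2 h2) (inv_pos.2 hq0)
    _ = q := by field_simp

theorem four_term_mul_todaRatio (hq0 : 0 < q) (hq1 : q < 1)
    (hpoch : ∀ k : ℕ, qPoch ((q : ℂ) ^ 2) (qpow q (2 * lam + 2)) k ≠ 0) (x : ℝ) (k : ℕ) :
    (qpow q (-(lam + 2 * k + 2)) - (qpow q lam + qpow q (-lam)) + qpow q (lam + 2 * k + 2))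
        * todaRatio q δ μ lam x k
      = (μ : ℂ) ^ 2 * qpow q (-(2 * (δ : ℂ))) * (1 - (q : ℂ) ^ 2) ^ 2 * (x : ℂ) ^ 2
        * qpow q ((1 - δ) * (lam + 2 * k)) := by
  have hfac : qpow q (-(lam + 2 * k + 2)) - (qpow q lam + qpow q (-lam)) + qpow q (lam + 2 * k + 2)
      = qpow q (-(lam + 2 * k + 2))
        * ((1 - qpow q (2 * k + 2)) * (1 - qpow q (2 * lam + 2 * k + 2))) := by
    rw [← sub_sub, qpow_four_term_eq]
    ring_nf
  have hexp : qpow q (-(lam + 2 * k + 2)) * qpow q ((2 - δ) * (2 * k + 1 + lam) - δ)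
      = qpow q (-(2 * (δ : ℂ))) * qpow q ((1 - δ) * (lam + 2 * k)) := by
    rw [← qpow_add, ← qpow_add]
    ring_nf
  have hd₁ : 1 - qpow q (2 * k + 2) ≠ 0 :=
    one_sub_qpow_ne_zero hq0 hq1 (by simp [add_pos_of_nonneg_of_pos])
  have hd₂ := one_sub_qpow_ne_zero_of_qPoch hq0 hpoch k
  rw [hfac, todaRatio, mul_right_comm, mul_assoc, div_mul_cancel₀ _ (mul_ne_zero hd₁ hd₂)]
  push_cast
  linear_combination ((1 - (q : ℂ) ^ 2) ^ 2 * (μ : ℂ) ^ 2 * (x : ℂ) ^ 2) * hexp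

theorem todaTerm_three_term (hq : 0 < q) {x : ℝ} (hμx : μ * x ≠ 0) (k : ℕ) :
    todaTerm q δ μ lam (q⁻¹ * x) k - (qpow q lam + qpow q (-lam)) * todaTerm q δ μ lam x k
        + todaTerm q δ μ lam (q * x) k
      = (qpow q (-(lam + 2 * k)) - (qpow q lam + qpow q (-lam)) + qpow q (lam + 2 * k))
        * todaTerm q δ μ lam x k := by
  have hinv := todaTerm_rpow_mul (δ := δ) (lam := lam) hq hμx (-1) k
  have hmul := todaTerm_rpow_mul (δ := δ) (lam := lam) hq hμx 1 k
  rw [Real.rpow_neg_one] at hinv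
  rw [Real.rpow_one] at hmul
  simp only [Complex.ofReal_neg, Complex.ofReal_one, neg_one_mul, one_mul] at hinv hmul
  rw [hinv, hmul]
  ring

theorem todaTerm_qdifference (hq0 : 0 < q) (hq1 : q < 1)
    (hpoch : ∀ k : ℕ, qPoch ((q : ℂ) ^ 2) (qpow q (2 * lam + 2)) k ≠ 0) {x : ℝ}
    (hμx : 0 < μ * x) (k : ℕ) :
    todaTerm q δ μ lam (q⁻¹ * x) (k + 1)
        - (qpow q lam + qpow q (-lam)) * todaTerm q δ μ lam x (k + 1)
        + todaTerm q δ μ lam (q * x) (k + 1)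
      = (μ : ℂ) ^ 2 * qpow q (-(2 * (δ : ℂ))) * (1 - (q : ℂ) ^ 2) ^ 2 * (x : ℂ) ^ 2
        * todaTerm q δ μ lam (q ^ ((1 : ℝ) - (δ : ℝ)) * x) k := by
  have hshift : qpow q (-(lam + 2 * ((k + 1 : ℕ) : ℂ))) - (qpow q lam + qpow q (-lam))
        + qpow q (lam + 2 * ((k + 1 : ℕ) : ℂ))
      = qpow q (-(lam + 2 * k + 2)) - (qpow q lam + qpow q (-lam)) + qpow q (lam + 2 * k + 2) := by
    push_cast
    ring_nf
  rw [todaTerm_three_term hq0 hμx.ne', todaTerm_succ hq0 hμx, todaTerm_rpow_mul hq0 hμx.ne',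
    hshift, ← mul_assoc, four_term_mul_todaRatio hq0 hq1 hpoch x k]
  push_cast
  ring

end Toda

/-- The three types of modified q²-Bessel functions are eigenfunctions of the
two-body relativistic open Toda Hamiltonian: for `δ ∈ {0,1,2}` the series
`ℱ(x)` converges (for every `x > 0` when `δ ∈ {0,1}`; for `δ = 2` under the
assumption `(1−q²)μx < q²`) and satisfies
`ℱ(q⁻¹x) − (q^λ + q^{−λ})ℱ(x) + ℱ(qx) − μ²q^{−2δ}(1−q²)²x²ℱ(q^{1−δ}x) = 0`. -/
theorem toda_qdifference_equation (q : ℝ) (hq0 : 0 < q) (hq1 : q < 1)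
    (δ : ℕ) (hδ : δ = 0 ∨ δ = 1 ∨ δ = 2) (μ : ℝ) (hμ : 0 < μ) (lam : ℂ)
    (hpoch : ∀ k : ℕ, qPoch ((q : ℂ) ^ 2) (qpow q (2 * lam + 2)) k ≠ 0)
    (x : ℝ) (hx : 0 < x) (hδ2 : δ = 2 → (1 - q ^ 2) * μ * x < q ^ 2) :
    Summable (todaTerm q δ μ lam (q⁻¹ * x)) ∧
    Summable (todaTerm q δ μ lam x) ∧
    Summable (todaTerm q δ μ lam (q * x)) ∧
    todaF q δ μ lam (q⁻¹ * x)
      - (qpow q lam + qpow q (-lam)) * todaF q δ μ lam x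
      + todaF q δ μ lam (q * x)
      - (μ : ℂ) ^ 2 * qpow q (-(2 * (δ : ℂ))) * (1 - (q : ℂ) ^ 2) ^ 2 * (x : ℂ) ^ 2
          * todaF q δ μ lam (q ^ ((1 : ℝ) - (δ : ℝ)) * x) = 0 := by
  have hδ' : δ ≤ 2 := by omega
  have hμx : 0 < μ * x := mul_pos hμ hx
  have hsum (s : ℝ) (hs : -1 ≤ s) : Summable (todaTerm q δ μ lam (q ^ s * x)) :=
    summable_todaTerm_rpow_mul hq0 hq1 hδ' hμ hx hδ2 hs
  have hs_inv : Summable (todaTerm q δ μ lam (q⁻¹ * x)) := by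
    simpa [Real.rpow_neg_one] using hsum (-1) le_rfl
  have hs_x : Summable (todaTerm q δ μ lam x) := by simpa using hsum 0 (by norm_num)
  have hs_mul : Summable (todaTerm q δ μ lam (q * x)) := by simpa using hsum 1 (by norm_num)
  refine ⟨hs_inv, hs_x, hs_mul, ?_⟩
  have hc := hs_x.mul_left (qpow q lam + qpow q (-lam))
  have hthree := (hs_inv.sub hc).add hs_mul
  rw [todaF, todaF, todaF, todaF, ← tsum_mul_left, ← tsum_mul_left, ← hs_inv.tsum_sub hc,
    ← (hs_inv.sub hc).tsum_add hs_mul, hthree.tsum_eq_zero_add, sub_eq_zero]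
  rw [todaTerm_three_term hq0 hμx.ne' 0, tsum_congr (todaTerm_qdifference hq0 hq1 hpoch hμx)]
  simp only [Nat.cast_zero, mul_zero, add_zero]
  ring
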